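/- arXiv:math/0308220 — 2 statements merged into one kernel-verified Lean document; each statement's English description precedes it below -/
import Mathlib

section
/- (Weighted mean ergodic theorem) With X, μ, β ergodic, γ, T, H as above, for every f ∈ H the Cesàro averages (1/N) Σ_{k=0}^{N-1} T^k f converge in H-norm to (∫_X f γ⁻¹ dμ) γ. -/
open MeasureTheory Filter

/-- The weighted composition operator `T f (x) = (γ x / γ (β x)) * f (β x)`. -/
noncomputable def weightedKoopman {X : Type*} (γ : X → ℝ) (β : X → X) (f : X → ℂ) : X → ℂ :=
  fun x => ((γ x / γ (β x) : ℝ) : ℂ) * f (β x)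

lemma wk_iter {X : Type*} (γ : X → ℝ) (β : X → X) (hγ : ∀ x, γ x ≠ 0) (f : X → ℂ) :
    ∀ (k : ℕ) (x : X),
      (weightedKoopman γ β)^[k] f x = ((γ x / γ (β^[k] x) : ℝ) : ℂ) * f (β^[k] x) := by
  intro k
  induction k with
  | zero => simp [hγ]
  | succ k ih =>
    intro x
    rw [Function.iterate_succ_apply']
    simp only [weightedKoopman, ih (β x), ← Function.iterate_succ_apply]
    rw [← mul_assoc, ← Complex.ofReal_mul]
    congr 2
    rw [div_mul_div_comm, mul_comm (γ x) (γ (β x)), mul_div_mul_left _ _ (hγ (β x))]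

lemma integral_norm_sq_L2 {X : Type*} [MeasurableSpace X] (μ : Measure X)
    (h : Lp ℂ 2 μ) : ∫ x, ‖h x‖ ^ 2 ∂μ = ‖h‖ ^ 2 := by
  rw [@norm_sq_eq_re_inner ℂ, L2.inner_def, ← integral_re (L2.integrable_inner h h)]
  refine integral_congr_ae (Eventually.of_forall fun x => ?_)
  simp [RCLike.inner_apply, RCLike.conj_mul]
  norm_cast

lemma Lp_coeFn_sum' {X : Type*} [MeasurableSpace X] {μ : Measure X} (s : Finset ℕ)
    (f : ℕ → Lp ℂ 2 μ) :
    (↑↑(∑ i ∈ s, f i) : X → ℂ) =ᵐ[μ] fun x => ∑ i ∈ s, f i x := by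
  classical
  induction s using Finset.induction_on with
  | empty =>
    simp only [Finset.sum_empty]
    filter_upwards [Lp.coeFn_zero ℂ 2 μ] with x hx
    simpa using hx
  | @insert a s h ih =>
    rw [Finset.sum_insert h]
    filter_upwards [Lp.coeFn_add (f a) (∑ i ∈ s, f i), ih] with x hx hx2
    rw [hx, Pi.add_apply, hx2, Finset.sum_insert h]

set_option maxHeartbeats 1000000 in
set_option synthInstance.maxHeartbeats 400000 in
set_option maxRecDepth 4000 in
/-- Weighted mean ergodic theorem: if `β` is an ergodic invertible measure preserving
transformation of the probability space `(X, μ)` and `γ` is measurable with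
`0 < c ≤ γ ≤ C`, then for every `f ∈ H = L²(X, γ⁻² dμ)` the Cesàro averages
`(1/N) ∑_{k<N} T^k f` of the unitary operator `T f = (γ/γ∘β)·(f∘β)` converge in the
`H`-norm to `(∫ f γ⁻¹ dμ) ⬝ γ`. -/
theorem weightedKoopman_mean_ergodic
    {X : Type*} [MeasurableSpace X] (μ : Measure X) [IsProbabilityMeasure μ]
    (β : X ≃ᵐ X) (hβ : Ergodic (β : X → X) μ)
    (γ : X → ℝ) (hγmeas : Measurable γ)
    (c C : ℝ) (hc : 0 < c) (hbd : ∀ x, c ≤ γ x ∧ γ x ≤ C)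
    (f : X → ℂ) (hfmeas : Measurable f) (hf : MemLp f 2 μ) :
    Tendsto (fun N : ℕ =>
        ∫ x, ‖(N : ℂ)⁻¹ * (∑ k ∈ Finset.range N, (weightedKoopman γ β)^[k] f x)
            - (∫ y, f y * (((γ y)⁻¹ : ℝ) : ℂ) ∂μ) * ((γ x : ℝ) : ℂ)‖ ^ 2
          * ((γ x) ^ 2)⁻¹ ∂μ)
      atTop (nhds 0) := by
  haveI : Fact ((1 : ENNReal) ≤ 2) := ⟨one_le_two⟩
  have hγpos : ∀ x, 0 < γ x := fun x => lt_of_lt_of_le hc (hbd x).1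
  have hγne : ∀ x, γ x ≠ 0 := fun x => (hγpos x).ne'
  set m : ℂ := ∫ y, f y * (((γ y)⁻¹ : ℝ) : ℂ) ∂μ with hm_def
  set g : X → ℂ := fun x => f x * (((γ x)⁻¹ : ℝ) : ℂ) with hg_def
  have hgmeas : Measurable g := hfmeas.mul (Complex.measurable_ofReal.comp hγmeas.inv)
  have hg : MemLp g 2 μ := by
    refine hf.of_le_mul (c := c⁻¹) hgmeas.aestronglyMeasurable (ae_of_all _ fun x => ?_)
    have hb : ‖(((γ x)⁻¹ : ℝ) : ℂ)‖ ≤ c⁻¹ := by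
      rw [Complex.norm_real, Real.norm_eq_abs, abs_of_pos (inv_pos.2 (hγpos x))]
      exact inv_anti₀ hc (hbd x).1
    calc ‖g x‖ = ‖f x‖ * ‖(((γ x)⁻¹ : ℝ) : ℂ)‖ := norm_mul _ _
      _ ≤ ‖f x‖ * c⁻¹ := mul_le_mul_of_nonneg_left hb (norm_nonneg _)
      _ = c⁻¹ * ‖f x‖ := mul_comm _ _
  set G : Lp ℂ 2 μ := hg.toLp g with hG_def
  set K : Lp ℂ 2 μ →L[ℂ] Lp ℂ 2 μ :=
    (Lp.compMeasurePreservingₗᵢ ℂ (β : X → X) hβ.toMeasurePreserving).toContinuousLinearMap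
    with hK_def
  have hKnorm : ‖K‖ ≤ 1 := LinearIsometry.norm_toContinuousLinearMap_le _
  have hKcoe : ∀ h : Lp ℂ 2 μ, (K h : X → ℂ) =ᵐ[μ] fun x => h (β x) :=
    fun h => Lp.coeFn_compMeasurePreserving h hβ.toMeasurePreserving
  obtain ⟨L, hLfix, hLorth, htend⟩ :
      ∃ L : Lp ℂ 2 μ, K L = L ∧
        (∀ u, K u = u → inner (𝕜 := ℂ) u (G - L) = 0) ∧
        Tendsto (birkhoffAverage ℂ (⇑K) _root_.id · G) atTop (nhds L) := by
    refine ⟨Submodule.orthogonalProjectionOnto (K.eqLocus (1 : Lp ℂ 2 μ →L[ℂ] Lp ℂ 2 μ)) G, ?_, ?_,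
      K.tendsto_birkhoffAverage_orthogonalProjection hKnorm G⟩
    · have := (Submodule.orthogonalProjectionOnto (K.eqLocus (1 : Lp ℂ 2 μ →L[ℂ] Lp ℂ 2 μ)) G).2
      rwa [LinearMap.mem_eqLocus] at this
    · intro u hu
      have hmem : u ∈ K.eqLocus (1 : Lp ℂ 2 μ →L[ℂ] Lp ℂ 2 μ) := by
        rwa [LinearMap.mem_eqLocus]
      exact (Submodule.mem_orthogonal _ _).1
        (Submodule.sub_starProjection_mem_orthogonal G) u hmem
  -- `L` is a.e. constant, equal to `m`
  set one : Lp ℂ 2 μ := (memLp_const (1 : ℂ)).toLp _ with hone_def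
  have hone : (one : X → ℂ) =ᵐ[μ] fun _ => (1 : ℂ) := MemLp.coeFn_toLp _
  have hqmp := hβ.toMeasurePreserving.quasiMeasurePreserving
  have hKone : K one = one := by
    apply Lp.ext
    refine (hKcoe one).trans ?_
    refine ((hqmp.ae_eq_comp hone).trans ?_).trans hone.symm
    rfl
  have hint : ∀ h : Lp ℂ 2 μ, inner (𝕜 := ℂ) one h = ∫ x, h x ∂μ := by
    intro h
    rw [L2.inner_def]
    refine integral_congr_ae (hone.mono fun x hx => ?_)
    simp [hx, RCLike.inner_apply]
  have hLinv : (L : X → ℂ) ∘ (β : X → X) =ᵐ[μ] L := by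
    have h1 := hKcoe L
    rw [hLfix] at h1
    exact h1.symm
  obtain ⟨cst, hcst⟩ := hβ.ae_eq_const_of_ae_eq_comp₀
    (Lp.aestronglyMeasurable L).aemeasurable.nullMeasurable hLinv
  have hGL : ∫ x, (G : X → ℂ) x ∂μ = ∫ x, (L : X → ℂ) x ∂μ := by
    have h0 := hLorth one hKone
    rw [inner_sub_right, sub_eq_zero, hint, hint] at h0
    exact h0
  have hcstm : cst = m := by
    have h1 : ∫ x, (L : X → ℂ) x ∂μ = cst := by
      rw [integral_congr_ae hcst]
      simp [Function.const]
    have h2 : ∫ x, (G : X → ℂ) x ∂μ = m := by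
      rw [integral_congr_ae (hg.coeFn_toLp)]
    rw [← h1, ← hGL, h2]
  have hLm : (L : X → ℂ) =ᵐ[μ] fun _ => m := by
    refine hcst.trans ?_
    rw [hcstm]
    rfl
  -- identify the Birkhoff averages
  have hiter : ∀ k : ℕ, ((⇑K)^[k] G : X → ℂ) =ᵐ[μ] fun x => g ((β : X → X)^[k] x) := by
    intro k
    induction k with
    | zero => simpa using hg.coeFn_toLp
    | succ k ih =>
      rw [Function.iterate_succ_apply']
      refine (hKcoe _).trans ?_
      refine (hqmp.ae_eq_comp ih).trans ?_
      refine Eventually.of_forall fun x => ?_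
      exact congrArg g (Function.iterate_succ_apply _ _ _).symm
  have hbirk : ∀ N : ℕ, ((birkhoffAverage ℂ (⇑K) _root_.id N G : Lp ℂ 2 μ) : X → ℂ) =ᵐ[μ]
      fun x => (N : ℂ)⁻¹ * ∑ k ∈ Finset.range N, g ((β : X → X)^[k] x) := by
    intro N
    have h1 : birkhoffAverage ℂ (⇑K) _root_.id N G
        = (N : ℂ)⁻¹ • ∑ k ∈ Finset.range N, (⇑K)^[k] G := by
      simp [birkhoffAverage, birkhoffSum]
    rw [h1]
    refine EventuallyEq.trans (MeasureTheory.Lp.coeFn_smul ((N : ℂ)⁻¹) (∑ k ∈ Finset.range N, (⇑K)^[k] G)) ?_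
    have h2 := Lp_coeFn_sum' (Finset.range N) (fun k => (⇑K)^[k] G)
    filter_upwards [h2, ae_all_iff.2 hiter] with x hx hx2
    simp only [Pi.smul_apply, hx, smul_eq_mul]
    congr 1
    exact Finset.sum_congr rfl fun k _ => hx2 k
  -- the integral identity for each `N`
  have key2 : ∀ N : ℕ,
      (∫ x, ‖(N : ℂ)⁻¹ * (∑ k ∈ Finset.range N, (weightedKoopman γ β)^[k] f x)
          - m * ((γ x : ℝ) : ℂ)‖ ^ 2 * ((γ x) ^ 2)⁻¹ ∂μ)
        = ‖birkhoffAverage ℂ (⇑K) _root_.id N G - L‖ ^ 2 := by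
    intro N
    rw [← integral_norm_sq_L2 μ (birkhoffAverage ℂ (⇑K) _root_.id N G - L)]
    refine integral_congr_ae ?_
    filter_upwards [hbirk N, hLm,
      Lp.coeFn_sub (birkhoffAverage ℂ (⇑K) _root_.id N G) L] with x hx1 hx2 hx3
    rw [hx3, Pi.sub_apply, hx1, hx2]
    have hsum : (∑ k ∈ Finset.range N, (weightedKoopman γ β)^[k] f x)
        = ((γ x : ℝ) : ℂ) * ∑ k ∈ Finset.range N, g ((β : X → X)^[k] x) := by
      rw [Finset.mul_sum]
      refine Finset.sum_congr rfl fun k _ => ?_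
      rw [wk_iter γ (β : X → X) hγne f k x]
      simp only [hg_def]
      push_cast
      ring
    rw [hsum]
    have halg : (N : ℂ)⁻¹ * (((γ x : ℝ) : ℂ) * ∑ k ∈ Finset.range N, g ((β : X → X)^[k] x))
        - m * ((γ x : ℝ) : ℂ)
        = ((γ x : ℝ) : ℂ) * ((N : ℂ)⁻¹ * (∑ k ∈ Finset.range N, g ((β : X → X)^[k] x)) - m) := by
      ring
    rw [halg, norm_mul, mul_pow, Complex.norm_real, Real.norm_eq_abs, sq_abs,
      mul_comm ((γ x) ^ 2), mul_assoc, mul_inv_cancel₀ (pow_ne_zero 2 (hγne x)), mul_one]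
  have htz : Tendsto (fun N => ‖birkhoffAverage ℂ (⇑K) _root_.id N G - L‖ ^ 2)
      atTop (nhds 0) := by
    have h0 := tendsto_iff_norm_sub_tendsto_zero.1 htend
    simpa using h0.pow 2
  exact htz.congr fun N => (key2 N).symm
end

section
/- (Pointwise bound from Weyl law) Suppose for each j, |u_j^b(q)|² ≤ Σ_{k: λ_k = λ_j} |u_k^b(q)|² and the counting sums satisfy Σ_{λ_k ≤ λ} |u_k^b(q)|² = Cλ^{n−1+m} + o(λ^{n−2+m}) uniformly in q (for m = 0 Neumann, m = 2 Dirichlet). Then ‖u_j^b‖_{L^∞} = o(λ_j^{(n−2+m)/2}). -/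
open Filter

lemma rpow_sub_rpow_le_aux {x y a : ℝ} (hy : 0 ≤ y) (hyx : y ≤ x) (ha : 1 ≤ a) :
    x ^ a - y ^ a ≤ a * x ^ (a - 1) * (x - y) := by
  rcases eq_or_lt_of_le hyx with rfl | hlt
  · simp
  have hx : 0 ≤ x := hy.trans hyx
  have hcont : ContinuousOn (fun t : ℝ => t ^ a) (Set.Icc y x) := by
    intro t ht
    exact (Real.continuousAt_rpow_const t a (Or.inr (by linarith))).continuousWithinAt
  have hderiv : ∀ t ∈ Set.Ioo y x, HasDerivAt (fun t : ℝ => t ^ a) (a * t ^ (a - 1)) t := by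
    intro t ht
    exact Real.hasDerivAt_rpow_const (Or.inr ha)
  obtain ⟨ξ, hξ, hξeq⟩ := exists_hasDerivAt_eq_slope (fun t : ℝ => t ^ a)
    (fun t => a * t ^ (a - 1)) hlt hcont hderiv
  have hξ0 : 0 ≤ ξ := le_of_lt (lt_of_le_of_lt hy hξ.1)
  have hmono : ξ ^ (a - 1) ≤ x ^ (a - 1) :=
    Real.rpow_le_rpow hξ0 (le_of_lt hξ.2) (by linarith)
  have hne : x - y ≠ 0 := by linarith
  have : x ^ a - y ^ a = a * ξ ^ (a - 1) * (x - y) := by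
    rw [hξeq, div_mul_cancel₀ _ hne]
  rw [this]
  have ha0 : (0:ℝ) ≤ a := by linarith
  have : a * ξ ^ (a - 1) ≤ a * x ^ (a - 1) := by nlinarith
  nlinarith

/-- Pointwise bound from the local Weyl law. Let `(λ_j)` be nondecreasing tending to `∞`,
and for each `q` in a compact space `K` let `(c_j(q))` be nonnegative with
`∑_{λ_k ≤ Λ} c_k(q) = C Λ^a + R(Λ, q)` where `sup_q |R(Λ,q)| = o(Λ^{a−1})`. Then
`sup_q c_j(q) = o(λ_j^{a−1})`, hence `sup_q √(c_j(q)) = o(λ_j^{(a−1)/2})`; with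
`c_j = |u_j^b|²` this gives `‖u_j^b‖_{L^∞} = o(λ_j^{(a−1)/2})` (with `a = n` for Neumann
and `a = n + 2` for Dirichlet in dimension `n`). -/
theorem sup_bound_of_uniform_weyl_remainder
    {K : Type*} [TopologicalSpace K] [CompactSpace K] [Nonempty K]
    (l : ℕ → ℝ) (hl : Monotone l) (hlpos : ∀ j, 0 < l j) (hlTop : Tendsto l atTop atTop)
    (N : ℝ → ℕ) (hN : ∀ Λ : ℝ, ∀ k : ℕ, l k ≤ Λ ↔ k < N Λ)
    (c : ℕ → K → ℝ) (hc : ∀ k q, 0 ≤ c k q)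
    (C : ℝ) (hC : 0 < C) (a : ℝ) (ha : 1 ≤ a)
    (hR : ∀ ε > (0 : ℝ), ∃ Λ₁ : ℝ, ∀ Λ ≥ Λ₁, ∀ q : K,
      |(∑ k ∈ Finset.range (N Λ), c k q) - C * Λ ^ a| ≤ ε * Λ ^ (a - 1)) :
    ∀ ε > (0 : ℝ), ∃ J : ℕ, ∀ j ≥ J, ∀ q : K,
      c j q ≤ ε * (l j) ^ (a - 1) ∧
      Real.sqrt (c j q) ≤ ε * (l j) ^ ((a - 1) / 2) := by

  -- key step: the first estimate with arbitrary ε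
  have hNmono : ∀ {Λ' Λ : ℝ}, Λ' ≤ Λ → N Λ' ≤ N Λ := by
    intro Λ' Λ hle
    by_contra hcon
    push_neg at hcon
    have h1 : N Λ < N Λ' := hcon
    have h2 : l (N Λ) ≤ Λ' := (hN Λ' (N Λ)).mpr h1
    have h3 : N Λ < N Λ := (hN Λ (N Λ)).mp (h2.trans hle)
    exact lt_irrefl _ h3
  have key : ∀ ε > (0 : ℝ), ∃ J : ℕ, ∀ j ≥ J, ∀ q : K,
      c j q ≤ ε * (l j) ^ (a - 1) := by
    intro ε hε
    set h : ℝ := ε / (2 * C * a) with hh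
    have hapos : (0:ℝ) < a := lt_of_lt_of_le one_pos ha
    have hhpos : 0 < h := div_pos hε (by positivity)
    obtain ⟨Λ₁, hΛ₁⟩ := hR (ε / 4) (by positivity)
    obtain ⟨J, hJ⟩ := (hlTop.eventually_ge_atTop (max Λ₁ 1 + h)).exists_forall_of_atTop
    refine ⟨J, fun j hj q => ?_⟩
    have hlj : max Λ₁ 1 + h ≤ l j := hJ j hj
    set Λ : ℝ := l j with hΛdef
    set Λ' : ℝ := Λ - h with hΛ'def
    have hΛ'ge : max Λ₁ 1 ≤ Λ' := by simp only [hΛ'def]; linarith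
    have hΛ'pos : (0:ℝ) < Λ' := lt_of_lt_of_le (by norm_num : (0:ℝ) < max Λ₁ 1) hΛ'ge
    have hΛ'Λ : Λ' ≤ Λ := by simp only [hΛ'def]; linarith
    have hΛpos : (0:ℝ) < Λ := lt_of_lt_of_le hΛ'pos hΛ'Λ
    have hR1 := hΛ₁ Λ (le_trans (le_trans (le_max_left _ _) hΛ'ge) hΛ'Λ) q
    have hR2 := hΛ₁ Λ' (le_trans (le_max_left _ _) hΛ'ge) q
    have hpowmono : Λ' ^ (a - 1) ≤ Λ ^ (a - 1) :=
      Real.rpow_le_rpow hΛ'pos.le hΛ'Λ (by linarith)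
    have hpownn : (0:ℝ) ≤ Λ ^ (a - 1) := Real.rpow_nonneg hΛpos.le _
    -- c j q is a single term in the window sum
    have hjin : j < N Λ := (hN Λ j).mp (le_refl _)
    have hjout : N Λ' ≤ j := by
      by_contra hcon
      push_neg at hcon
      have : l j ≤ Λ' := (hN Λ' j).mpr hcon
      simp only [hΛ'def, ← hΛdef] at this
      linarith
    have hsub : c j q ≤ (∑ k ∈ Finset.range (N Λ), c k q)
        - (∑ k ∈ Finset.range (N Λ'), c k q) := by
      rw [← Finset.sum_Ico_eq_sub _ (hNmono hΛ'Λ)]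
      exact Finset.single_le_sum (fun k _ => hc k q)
        (Finset.mem_Ico.mpr ⟨hjout, hjin⟩)
    -- main term estimate
    have hmain : C * Λ ^ a - C * Λ' ^ a ≤ (ε / 2) * Λ ^ (a - 1) := by
      have h1 : Λ ^ a - Λ' ^ a ≤ a * Λ ^ (a - 1) * (Λ - Λ') :=
        rpow_sub_rpow_le_aux hΛ'pos.le hΛ'Λ ha
      have h2 : Λ - Λ' = h := by simp [hΛ'def]
      have h3 : C * (a * Λ ^ (a - 1) * h) = (ε / 2) * Λ ^ (a - 1) := by
        rw [hh]; field_simp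
      have h1' : C * (Λ ^ a - Λ' ^ a) ≤ C * (a * Λ ^ (a - 1) * h) := by
        rw [← h2]; exact mul_le_mul_of_nonneg_left h1 hC.le
      rw [mul_sub] at h1'
      linarith
    rw [abs_le] at hR1 hR2
    have hR2' : -((ε/4) * Λ ^ (a-1)) ≤ (∑ k ∈ Finset.range (N Λ'), c k q) - C * Λ' ^ a
        ∧ (∑ k ∈ Finset.range (N Λ'), c k q) - C * Λ' ^ a ≤ (ε/4) * Λ ^ (a-1) := by
      constructor
      · have := hR2.1
        nlinarith [mul_le_mul_of_nonneg_left hpowmono (by linarith : (0:ℝ) ≤ ε/4)]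
      · have := hR2.2
        nlinarith [mul_le_mul_of_nonneg_left hpowmono (by linarith : (0:ℝ) ≤ ε/4)]
    have := hR1.2
    have := hR2'.1
    nlinarith
  intro ε hε
  obtain ⟨J, hJ⟩ := key (min ε (ε ^ 2)) (lt_min hε (by positivity))
  refine ⟨J, fun j hj q => ?_⟩
  have hbase := hJ j hj q
  have hpownn : (0:ℝ) ≤ (l j) ^ (a - 1) := Real.rpow_nonneg (hlpos j).le _
  constructor
  · calc c j q ≤ min ε (ε ^ 2) * (l j) ^ (a - 1) := hbase
      _ ≤ ε * (l j) ^ (a - 1) := by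
          exact mul_le_mul_of_nonneg_right (min_le_left _ _) hpownn
  · have h1 : c j q ≤ ε ^ 2 * (l j) ^ (a - 1) :=
      hbase.trans (mul_le_mul_of_nonneg_right (min_le_right _ _) hpownn)
    have h2 : Real.sqrt (c j q) ≤ Real.sqrt (ε ^ 2 * (l j) ^ (a - 1)) :=
      Real.sqrt_le_sqrt h1
    have h3 : Real.sqrt (ε ^ 2 * (l j) ^ (a - 1)) = ε * (l j) ^ ((a - 1) / 2) := by
      rw [Real.sqrt_mul (by positivity), Real.sqrt_sq hε.le,
        Real.sqrt_eq_rpow, ← Real.rpow_mul (hlpos j).le]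
      ring_nf
    rw [h3] at h2
    exact h2
end
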